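/- Fix κ > 0 and define f : (0, ∞) → ℝ by f(t) := e^{−κ√t}/√t. Then f is strictly completely monotonic: for every integer n ≥ 0 and every t > 0, (−1)ⁿ f⁽ⁿ⁾(t) > 0, where f⁽ⁿ⁾ denotes the n-th derivative of f. -/

import Mathlib

/-!
Every derivative of `f(t) = e^{-κ√t}/√t` has the shape `(-1)ⁿ e^{-κ√t} Pₙ(1/√t)` with
`P₀ = X` and `Pₙ₊₁ = (κ/2) X Pₙ + (1/2) X³ Pₙ'`: differentiating `e^{-κ√t}` and `(√t)⁻ᵏ`
each brings down a negative factor and raises the power of `1/√t`. The recursion keeps the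
coefficients of `Pₙ` nonnegative and, since `κ > 0`, keeps `Pₙ(x) > 0` for `x > 0`.
-/

open Polynomial

namespace Polynomial

lemma eval_nonneg_of_coeff_nonneg {P : ℝ[X]} (hP : ∀ i, 0 ≤ P.coeff i) {x : ℝ} (hx : 0 ≤ x) :
    0 ≤ P.eval x := by
  rw [eval_eq_sum_range]
  exact Finset.sum_nonneg fun i _ => mul_nonneg (hP i) (pow_nonneg hx i)

lemma coeff_derivative_nonneg {P : ℝ[X]} (hP : ∀ i, 0 ≤ P.coeff i) (i : ℕ) :
    0 ≤ (derivative P).coeff i := by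
  rw [coeff_derivative]
  exact mul_nonneg (hP _) (by positivity)

lemma coeff_C_mul_X_pow_mul_nonneg {a : ℝ} (ha : 0 ≤ a) (k : ℕ) {P : ℝ[X]}
    (hP : ∀ i, 0 ≤ P.coeff i) (i : ℕ) : 0 ≤ (C a * X ^ k * P).coeff i := by
  rw [mul_assoc, mul_comm (X ^ k) P, coeff_C_mul, coeff_mul_X_pow']
  split
  · exact mul_nonneg ha (hP _)
  · simp

end Polynomial

lemma hasDerivAt_exp_mul_eval_inv_sqrt (κ : ℝ) (P : ℝ[X]) {t : ℝ} (ht : 0 < t) :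
    HasDerivAt (fun s : ℝ => Real.exp (-κ * √s) * P.eval (√s)⁻¹)
      (-(Real.exp (-κ * √t) *
        (C (κ / 2) * X * P + C (1 / 2) * X ^ 3 * derivative P).eval (√t)⁻¹)) t := by
  have hsqrt_ne : √t ≠ 0 := (Real.sqrt_pos.mpr ht).ne'
  have hsqrt : HasDerivAt Real.sqrt (1 / (2 * √t)) t := Real.hasDerivAt_sqrt ht.ne'
  have hexp : HasDerivAt (fun s : ℝ => Real.exp (-κ * √s))
      (Real.exp (-κ * √t) * (-κ * (1 / (2 * √t)))) t := (hsqrt.const_mul (-κ)).exp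
  have hpoly : HasDerivAt (fun s : ℝ => P.eval (√s)⁻¹)
      ((derivative P).eval (√t)⁻¹ * (-(1 / (2 * √t)) / √t ^ 2)) t :=
    (P.hasDerivAt _).comp t (hsqrt.inv hsqrt_ne)
  have hprod : HasDerivAt (fun s : ℝ => Real.exp (-κ * √s) * P.eval (√s)⁻¹) _ t :=
    hexp.mul hpoly
  convert hprod using 1
  simp only [eval_add, eval_mul, eval_C, eval_X, eval_pow]
  field_simp
  ring

noncomputable def resolventPoly (κ : ℝ) : ℕ → ℝ[X]
  | 0 => X
  | n + 1 => C (κ / 2) * X * resolventPoly κ n + C (1 / 2) * X ^ 3 * derivative (resolventPoly κ n)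

variable {κ : ℝ}

lemma coeff_resolventPoly_nonneg (hκ : 0 ≤ κ) (n i : ℕ) : 0 ≤ (resolventPoly κ n).coeff i := by
  induction n generalizing i with
  | zero => simp only [resolventPoly, coeff_X]; split <;> norm_num
  | succ n ih =>
    rw [resolventPoly, coeff_add]
    exact add_nonneg (by simpa using coeff_C_mul_X_pow_mul_nonneg (by positivity) 1 ih i)
      (coeff_C_mul_X_pow_mul_nonneg (by norm_num) 3 (coeff_derivative_nonneg ih) i)

lemma eval_resolventPoly_pos (hκ : 0 < κ) (n : ℕ) {x : ℝ} (hx : 0 < x) :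
    0 < (resolventPoly κ n).eval x := by
  induction n with
  | zero => simpa [resolventPoly] using hx
  | succ n ih =>
    have hder : 0 ≤ (derivative (resolventPoly κ n)).eval x :=
      eval_nonneg_of_coeff_nonneg (coeff_derivative_nonneg (coeff_resolventPoly_nonneg hκ.le n))
        hx.le
    simp only [resolventPoly, eval_add, eval_mul, eval_C, eval_X, eval_pow]
    positivity

lemma iteratedDeriv_resolvent_kernel_sqrt (n : ℕ) {t : ℝ} (ht : 0 < t) :
    iteratedDeriv n (fun s : ℝ => Real.exp (-κ * √s) / √s) t
      = (-1) ^ n * (Real.exp (-κ * √t) * (resolventPoly κ n).eval (√t)⁻¹) := by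
  induction n generalizing t with
  | zero => simp [resolventPoly, div_eq_mul_inv]
  | succ n ih =>
    have hloc : iteratedDeriv n (fun s : ℝ => Real.exp (-κ * √s) / √s) =ᶠ[nhds t]
        fun s => (-1) ^ n * (Real.exp (-κ * √s) * (resolventPoly κ n).eval (√s)⁻¹) := by
      filter_upwards [eventually_gt_nhds ht] with s hs using ih hs
    rw [iteratedDeriv_succ, hloc.deriv_eq,
      ((hasDerivAt_exp_mul_eval_inv_sqrt κ _ ht).const_mul _).deriv, resolventPoly]
    ring

theorem resolvent_kernel_sqrt_strictly_completely_monotonic (κ : ℝ) (hκ : 0 < κ) :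
    ∀ (n : ℕ) (t : ℝ), 0 < t →
      0 < (-1 : ℝ) ^ n *
        iteratedDeriv n (fun s : ℝ => Real.exp (-κ * Real.sqrt s) / Real.sqrt s) t := by
  intro n t ht
  have hP := eval_resolventPoly_pos hκ n (inv_pos.mpr (Real.sqrt_pos.mpr ht))
  rw [iteratedDeriv_resolvent_kernel_sqrt n ht, ← mul_assoc, ← pow_add,
    Even.neg_one_pow ⟨n, rfl⟩, one_mul]
  positivity
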